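/- arXiv:0706.4267 — 4 statements merged into one kernel-verified Lean document; each statement's English description precedes it below -/
import Mathlib

section
/- Let φ be C¹ near x₀ with ∇φ(x₀) ≠ 0, and for each small ε let x₁^ε be a maximum point of φ on the closed ball B̄_ε(x₀). Then (x₁^ε − x₀)/ε → ∇φ(x₀)/|∇φ(x₀)| as ε → 0. -/
/-!
Write `x₁ ε = x₀ + ε • y ε` with `‖y ε‖ ≤ 1`, and let `u` be the unit vector along `g = ∇φ(x₀)`.
Comparing the maximum with the value at `x₀ + ε • u` and linearising `φ` at `x₀` gives
`‖g‖ - o(1) ≤ ⟪g, y ε⟫ ≤ ‖g‖`, so `⟪u, y ε⟫ → 1`. On the closed unit ball this forces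
`y ε → u`, because `‖y - u‖² ≤ 2 (1 - ⟪u, y⟫)` there.
-/

open Filter Topology Metric RealInnerProductSpace

lemma norm_inv_smul_sub_le_one {F : Type*} [SeminormedAddCommGroup F] [NormedSpace ℝ F]
    {x x₀ : F} {ε : ℝ} (hε : 0 < ε) (hx : x ∈ closedBall x₀ ε) : ‖ε⁻¹ • (x - x₀)‖ ≤ 1 := by
  rw [norm_smul, norm_inv, Real.norm_of_nonneg hε.le, ← dist_eq_norm]
  exact inv_mul_le_one_of_le₀ (mem_closedBall.mp hx) hε.le

section InnerProductSpace

variable {E : Type*} [NormedAddCommGroup E] [InnerProductSpace ℝ E]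

lemma norm_sub_sq_le_two_mul_one_sub_inner {u y : E} (hu : ‖u‖ = 1) (hy : ‖y‖ ≤ 1) :
    ‖y - u‖ ^ 2 ≤ 2 * (1 - ⟪u, y⟫) := by
  have hy2 : ‖y‖ ^ 2 ≤ 1 := pow_le_one₀ (norm_nonneg y) hy
  rw [norm_sub_sq_real, hu, real_inner_comm]
  linarith

lemma tendsto_of_norm_le_one_of_inner_tendsto_one {α : Type*} {l : Filter α} {y : α → E} {u : E}
    (hu : ‖u‖ = 1) (hy : ∀ᶠ a in l, ‖y a‖ ≤ 1) (h : Tendsto (fun a => ⟪u, y a⟫) l (𝓝 1)) :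
    Tendsto y l (𝓝 u) := by
  rw [tendsto_iff_norm_sub_tendsto_zero]
  have hsq : Tendsto (fun a => √(2 * (1 - ⟪u, y a⟫))) l (𝓝 0) := by
    simpa using ((h.const_sub 1).const_mul 2).sqrt
  refine squeeze_zero' (Eventually.of_forall fun _ => norm_nonneg _) ?_ hsq
  filter_upwards [hy] with a ha
  exact Real.le_sqrt_of_sq_le (norm_sub_sq_le_two_mul_one_sub_inner hu ha)

variable [CompleteSpace E]

lemma HasGradientAt.isLittleO_remainder_of_mem_closedBall {φ : E → ℝ} {g x₀ : E}
    (hφ : HasGradientAt φ g x₀) {a : ℝ → E} (ha : ∀ᶠ ε in 𝓝[>] 0, a ε ∈ closedBall x₀ ε) :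
    (fun ε => φ (a ε) - φ x₀ - ⟪g, a ε - x₀⟫) =o[𝓝[>] (0 : ℝ)] id := by
  have hO : (fun ε => a ε - x₀) =O[𝓝[>] (0 : ℝ)] id := by
    refine Asymptotics.isBigO_iff.mpr ⟨1, ?_⟩
    filter_upwards [ha, self_mem_nhdsWithin] with ε hε_mem (hε : 0 < ε)
    rw [one_mul, id, Real.norm_of_nonneg hε.le, ← dist_eq_norm]
    exact hε_mem
  have ha₀ : Tendsto a (𝓝[>] 0) (𝓝 x₀) :=
    tendsto_sub_nhds_zero_iff.mp (hO.trans_tendsto (tendsto_id.mono_left nhdsWithin_le_nhds))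
  exact ((hasGradientAt_iff_isLittleO.mp hφ).comp_tendsto ha₀).trans_isBigO hO

lemma HasGradientAt.tendsto_inner_of_isMaxOn_closedBall {φ : E → ℝ} {g x₀ : E}
    (hφ : HasGradientAt φ g x₀) {x₁ : ℝ → E}
    (hmax : ∀ᶠ ε in 𝓝[>] (0 : ℝ), x₁ ε ∈ closedBall x₀ ε ∧ IsMaxOn φ (closedBall x₀ ε) (x₁ ε)) :
    Tendsto (fun ε : ℝ => ⟪g, ε⁻¹ • (x₁ ε - x₀)⟫) (𝓝[>] 0) (𝓝 ‖g‖) := by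
  set p : ℝ → E := fun ε => x₀ + ε • (‖g‖⁻¹ • g)
  have hp_mem : ∀ ε : ℝ, 0 < ε → p ε ∈ closedBall x₀ ε := fun ε hε => by
    rw [mem_closedBall, dist_eq_norm, add_sub_cancel_left, norm_smul, Real.norm_of_nonneg hε.le]
    refine mul_le_of_le_one_right hε.le ?_
    rw [norm_smul, norm_inv, norm_norm]
    exact inv_mul_le_one_of_le₀ le_rfl (norm_nonneg _)
  have hp_inner : ∀ ε : ℝ, ⟪g, p ε - x₀⟫ = ε * ‖g‖ := fun ε => by
    rw [add_sub_cancel_left, inner_smul_right, inner_smul_right, real_inner_self_eq_norm_sq]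
    rcases eq_or_ne ‖g‖ 0 with hg | hg
    · simp [hg]
    · field_simp
  have hp_eventually : ∀ᶠ ε in 𝓝[>] (0 : ℝ), p ε ∈ closedBall x₀ ε :=
    eventually_nhdsWithin_of_forall hp_mem
  set δ : ℝ → ℝ := fun ε =>
    ((φ (x₁ ε) - φ x₀ - ⟪g, x₁ ε - x₀⟫) - (φ (p ε) - φ x₀ - ⟪g, p ε - x₀⟫)) / ε
  have hδ : Tendsto δ (𝓝[>] 0) (𝓝 0) :=
    ((hφ.isLittleO_remainder_of_mem_closedBall (hmax.mono fun _ h => h.1)).sub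
      (hφ.isLittleO_remainder_of_mem_closedBall hp_eventually)).tendsto_div_nhds_zero
  refine tendsto_of_tendsto_of_tendsto_of_le_of_le' (by simpa using hδ.const_sub ‖g‖)
    tendsto_const_nhds ?_ ?_
  · filter_upwards [hmax, self_mem_nhdsWithin] with ε hε_max (hε : 0 < ε)
    have hle : φ (p ε) ≤ φ (x₁ ε) := hε_max.2 (hp_mem ε hε)
    rw [inner_smul_right, sub_le_iff_le_add, ← sub_le_iff_le_add']
    calc ‖g‖ - ε⁻¹ * ⟪g, x₁ ε - x₀⟫ = (ε * ‖g‖ - ⟪g, x₁ ε - x₀⟫) / ε := by field_simp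
      _ ≤ δ ε := by
        refine div_le_div_of_nonneg_right ?_ hε.le
        rw [hp_inner]
        linarith
  · filter_upwards [hmax, self_mem_nhdsWithin] with ε hε_mem (hε : 0 < ε)
    exact (real_inner_le_norm _ _).trans
      (mul_le_of_le_one_right (norm_nonneg g) (norm_inv_smul_sub_le_one hε hε_mem.1))

end InnerProductSpace

/-- If φ is C¹ near x₀ with ∇φ(x₀) ≠ 0 and x₁^ε is a maximum point
of φ on B̄_ε(x₀), then (x₁^ε − x₀)/ε → ∇φ(x₀)/|∇φ(x₀)| as ε → 0⁺. -/
theorem max_points_direction_of_gradient {n : ℕ}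
    (φ : EuclideanSpace ℝ (Fin n) → ℝ) (x₀ : EuclideanSpace ℝ (Fin n))
    (x₁ : ℝ → EuclideanSpace ℝ (Fin n))
    (hφ : ContDiffAt ℝ 1 φ x₀) (hgrad : gradient φ x₀ ≠ 0)
    (hmax : ∀ᶠ ε in 𝓝[>] (0 : ℝ),
      x₁ ε ∈ closedBall x₀ ε ∧ IsMaxOn φ (closedBall x₀ ε) (x₁ ε)) :
    Tendsto (fun ε : ℝ => ε⁻¹ • (x₁ ε - x₀)) (𝓝[>] (0 : ℝ))
      (𝓝 (‖gradient φ x₀‖⁻¹ • gradient φ x₀)) := by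
  set g := gradient φ x₀
  have hg : ‖g‖ ≠ 0 := norm_ne_zero_iff.mpr hgrad
  have hu : ‖‖g‖⁻¹ • g‖ = 1 := by
    rw [norm_smul, norm_inv, norm_norm, inv_mul_cancel₀ hg]
  have hy : ∀ᶠ ε in 𝓝[>] (0 : ℝ), ‖ε⁻¹ • (x₁ ε - x₀)‖ ≤ 1 := by
    filter_upwards [hmax, self_mem_nhdsWithin] with ε hε_max hε
    exact norm_inv_smul_sub_le_one hε hε_max.1
  have hφ' : HasGradientAt φ g x₀ := (hφ.differentiableAt one_ne_zero).hasGradientAt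
  refine tendsto_of_norm_le_one_of_inner_tendsto_one hu hy ?_
  simpa only [inner_smul_left, RCLike.conj_to_real, inv_mul_cancel₀ hg] using
    (hφ'.tendsto_inner_of_isMaxOn_closedBall hmax).const_mul ‖g‖⁻¹
end

section
/- Let φ be C¹ near x₀ with ∇φ(x₀) ≠ 0, and for each small ε let x₂^ε be a minimum point of φ on the closed ball B̄_ε(x₀). Then (x₂^ε − x₀)/ε → −∇φ(x₀)/|∇φ(x₀)| as ε → 0. -/
open Filter Topology Metric

/-!
Write `u ε = ε⁻¹ • (x₂ ε - x₀)`, a point of the closed unit ball, and `w = -∇φ(x₀)/‖∇φ(x₀)‖`.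
Comparing `x₂ ε` with the competitor `x₀ + ε w` through the first-order expansion of `φ`
gives `⟪∇φ(x₀), u ε⟫ ≤ -‖∇φ(x₀)‖ + o(1)`, i.e. `⟪u ε, w⟫ ≥ 1 - o(1)`. For `‖u‖ ≤ 1` and
`‖w‖ = 1` one has `‖u - w‖² ≤ 2 (1 - ⟪u, w⟫)`, hence `u ε → w`.
-/

theorem tendsto_nhdsWithin_Ioi_of_eventually_mem_closedBall {X : Type*} [PseudoMetricSpace X]
    {x₀ : X} {x : ℝ → X} (hx : ∀ᶠ ε in 𝓝[>] (0 : ℝ), x ε ∈ closedBall x₀ ε) :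
    Tendsto x (𝓝[>] (0 : ℝ)) (𝓝 x₀) := by
  rw [tendsto_iff_dist_tendsto_zero]
  exact squeeze_zero' (.of_forall fun _ => dist_nonneg) hx
    (tendsto_id.mono_left nhdsWithin_le_nhds)

section MinOnClosedBall

variable {E : Type*} [NormedAddCommGroup E] [NormedSpace ℝ E] {x₀ : E} {x : ℝ → E}

theorem eventually_norm_inv_smul_sub_le_one
    (hx : ∀ᶠ ε in 𝓝[>] (0 : ℝ), x ε ∈ closedBall x₀ ε) :
    ∀ᶠ ε in 𝓝[>] (0 : ℝ), ‖ε⁻¹ • (x ε - x₀)‖ ≤ 1 := by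
  filter_upwards [hx, self_mem_nhdsWithin] with ε hxε (hε : 0 < ε)
  rw [norm_smul, norm_inv, Real.norm_of_nonneg hε.le, ← dist_eq_norm]
  exact inv_mul_le_one_of_le₀ (mem_closedBall.mp hxε) hε.le

theorem HasFDerivAt.eventually_apply_inv_smul_sub_le {φ : E → ℝ} {φ' : E →L[ℝ] ℝ} {v : E}
    (hφ : HasFDerivAt φ φ' x₀)
    (hmin : ∀ᶠ ε in 𝓝[>] (0 : ℝ),
      x ε ∈ closedBall x₀ ε ∧ IsMinOn φ (closedBall x₀ ε) (x ε))
    (hv : ‖v‖ ≤ 1) {δ : ℝ} (hδ : 0 < δ) :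
    ∀ᶠ ε in 𝓝[>] (0 : ℝ), φ' (ε⁻¹ • (x ε - x₀)) ≤ φ' v + δ := by
  have hcomp_mem : ∀ᶠ ε in 𝓝[>] (0 : ℝ), x₀ + ε • v ∈ closedBall x₀ ε := by
    filter_upwards [self_mem_nhdsWithin] with ε (hε : 0 < ε)
    rw [mem_closedBall, dist_self_add_left, norm_smul, Real.norm_of_nonneg hε.le]
    exact mul_le_of_le_one_right hε.le hv
  have hx_mem : ∀ᶠ ε in 𝓝[>] (0 : ℝ), x ε ∈ closedBall x₀ ε := hmin.mono fun _ h => h.1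
  have hexpand := hφ.isLittleO.def (half_pos hδ)
  filter_upwards [hmin, hcomp_mem, self_mem_nhdsWithin,
    (tendsto_nhdsWithin_Ioi_of_eventually_mem_closedBall hx_mem).eventually hexpand,
    (tendsto_nhdsWithin_Ioi_of_eventually_mem_closedBall hcomp_mem).eventually hexpand]
    with ε ⟨hxε, hminε⟩ hcompε (hε : 0 < ε) hx_exp hcomp_exp
  have hx_dist : ‖x ε - x₀‖ ≤ ε := by rw [← dist_eq_norm]; exact mem_closedBall.mp hxε
  have hcomp_dist : ‖ε • v‖ ≤ ε := by
    rw [← add_sub_cancel_left x₀ (ε • v), ← dist_eq_norm]; exact mem_closedBall.mp hcompε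
  have hle : φ (x ε) ≤ φ (x₀ + ε • v) := hminε hcompε
  rw [Real.norm_eq_abs, abs_le] at hx_exp hcomp_exp
  rw [add_sub_cancel_left, map_smul, smul_eq_mul] at hcomp_exp
  have hx_err : δ / 2 * ‖x ε - x₀‖ ≤ δ / 2 * ε := by gcongr
  have hcomp_err : δ / 2 * ‖ε • v‖ ≤ δ / 2 * ε := by gcongr
  have hkey : φ' (x ε - x₀) ≤ ε * φ' v + δ * ε := by linarith [hx_exp.1, hcomp_exp.2]
  rw [map_smul, smul_eq_mul, inv_mul_le_iff₀ hε]
  linarith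

end MinOnClosedBall

section UnitDirection

open scoped RealInnerProductSpace

variable {F : Type*} [NormedAddCommGroup F] [InnerProductSpace ℝ F]

theorem real_inner_neg_inv_norm_smul_self (g : F) : ⟪g, -(‖g‖⁻¹ • g)⟫ = -‖g‖ := by
  rcases eq_or_ne g 0 with rfl | hg
  · simp
  rw [inner_neg_right, real_inner_smul_right, real_inner_self_eq_norm_sq]
  field_simp

theorem norm_add_inv_norm_smul_sq_le {g u : F} (hg : g ≠ 0) (hu : ‖u‖ ≤ 1) :
    ‖u + ‖g‖⁻¹ • g‖ ^ 2 ≤ 2 * ‖g‖⁻¹ * (⟪g, u⟫ + ‖g‖) := by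
  have hg' : 0 < ‖g‖ := norm_pos_iff.mpr hg
  rw [norm_add_sq_real, real_inner_smul_right, norm_smul, norm_inv, norm_norm,
    inv_mul_cancel₀ hg'.ne', real_inner_comm]
  have hu2 : ‖u‖ ^ 2 ≤ 1 := pow_le_one₀ (norm_nonneg u) hu
  have : 2 * ‖g‖⁻¹ * ‖g‖ = 2 := by field_simp
  nlinarith

theorem tendsto_neg_inv_norm_smul_of_eventually_inner_le {ι : Type*} {l : Filter ι}
    {g : F} {u : ι → F} (hg : g ≠ 0) (hu : ∀ᶠ i in l, ‖u i‖ ≤ 1)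
    (hinner : ∀ δ > 0, ∀ᶠ i in l, ⟪g, u i⟫ ≤ -‖g‖ + δ) :
    Tendsto u l (𝓝 (-(‖g‖⁻¹ • g))) := by
  have hg' : 0 < ‖g‖ := norm_pos_iff.mpr hg
  rw [Metric.tendsto_nhds]
  intro η hη
  filter_upwards [hu, hinner (‖g‖ * η ^ 2 / 4) (by positivity)] with i hui hgi
  rw [dist_eq_norm, sub_neg_eq_add]
  refine lt_of_pow_lt_pow_left₀ 2 hη.le ((norm_add_inv_norm_smul_sq_le hg hui).trans_lt ?_)
  calc 2 * ‖g‖⁻¹ * (⟪g, u i⟫ + ‖g‖) ≤ 2 * ‖g‖⁻¹ * (‖g‖ * η ^ 2 / 4) := by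
        gcongr; linarith
    _ < η ^ 2 := by field_simp; nlinarith

end UnitDirection

/-- If φ is C¹ near x₀ with ∇φ(x₀) ≠ 0 and x₂^ε is a minimum point
of φ on B̄_ε(x₀), then (x₂^ε − x₀)/ε → −∇φ(x₀)/|∇φ(x₀)| as ε → 0⁺. -/
theorem min_points_direction_of_gradient {n : ℕ}
    (φ : EuclideanSpace ℝ (Fin n) → ℝ) (x₀ : EuclideanSpace ℝ (Fin n))
    (x₂ : ℝ → EuclideanSpace ℝ (Fin n))
    (hφ : ContDiffAt ℝ 1 φ x₀) (hgrad : gradient φ x₀ ≠ 0)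
    (hmin : ∀ᶠ ε in 𝓝[>] (0 : ℝ),
      x₂ ε ∈ closedBall x₀ ε ∧ IsMinOn φ (closedBall x₀ ε) (x₂ ε)) :
    Tendsto (fun ε : ℝ => ε⁻¹ • (x₂ ε - x₀)) (𝓝[>] (0 : ℝ))
      (𝓝 (-(‖gradient φ x₀‖⁻¹ • gradient φ x₀))) := by
  set g := gradient φ x₀
  have hderiv : HasFDerivAt φ (InnerProductSpace.toDual ℝ _ g) x₀ :=
    (hφ.differentiableAt one_ne_zero).hasGradientAt.hasFDerivAt
  have hdir : ‖-(‖g‖⁻¹ • g)‖ ≤ 1 := by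
    rw [norm_neg, norm_smul, norm_inv, norm_norm, inv_mul_cancel₀ (norm_ne_zero_iff.mpr hgrad)]
  refine tendsto_neg_inv_norm_smul_of_eventually_inner_le hgrad
    (eventually_norm_inv_smul_sub_le_one (hmin.mono fun _ h => h.1)) fun δ hδ => ?_
  simpa only [InnerProductSpace.toDual_apply_apply, real_inner_neg_inv_norm_smul_self] using
    hderiv.eventually_apply_inv_smul_sub_le hmin hdir hδ
end

section
/- Let φ be C² near x₀ with ∇φ(x₀) ≠ 0. Suppose there are points x_ε → x₀ with B̄_ε(x_ε) contained in the domain, and a function η(ε) = o(ε²), such that 2φ(x_ε) ≥ max_{B̄_ε(x_ε)} φ + min_{B̄_ε(x_ε)} φ − 2η(ε) for all small ε. Then Δ_∞φ(x₀) := ⟨D²φ(x₀)∇φ(x₀)/|∇φ(x₀)|, ∇φ(x₀)/|∇φ(x₀)|⟩ ≤ 0. -/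
/-!
Put `v = ∇φ(x₀)/|∇φ(x₀)|`, let `x_ε + ε w_ε` minimize `φ` on `B̄_ε(x_ε)`, and let `A = D∇φ(x₀)`.
Comparing this minimum with `φ(x_ε - ε v)` through the strict first-order expansion of `φ` at
`x₀` forces `w_ε → -v`. Since the maximum over the ball is at least `φ(x_ε - ε w_ε)`, the DPP
bounds the symmetric second difference `φ(x_ε + ε w_ε) + φ(x_ε - ε w_ε) - 2 φ(x_ε)` by
`2 η(ε) = o(ε²)`; a second-order expansion of that difference, uniform in the base point, shows
that after division by `ε²` it tends to `⟪A v, v⟫`, which is therefore `≤ 0`.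
-/

open RealInnerProductSpace Filter Topology Metric Set Asymptotics

def secondDiff {X : Type*} [AddCommGroup X] (φ : X → ℝ) (x h : X) : ℝ :=
  φ (x + h) + φ (x - h) - 2 * φ x

theorem Convex.add_smul_mem_of_add_mem_of_sub_mem {X : Type*} [AddCommGroup X] [Module ℝ X]
    {s : Set X} (hs : Convex ℝ s) {x h : X} (hp : x + h ∈ s) (hm : x - h ∈ s) {t : ℝ}
    (ht : |t| ≤ 1) : x + t • h ∈ s := by
  obtain ⟨ht₁, ht₂⟩ := abs_le.1 ht
  convert hs hm hp (a := (1 - t) / 2) (b := (1 + t) / 2) (by linarith) (by linarith) (by ring)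
    using 1
  module

theorem Filter.Tendsto.eventually_closedBall_subset {α X : Type*} [PseudoMetricSpace X]
    {l : Filter α} {x : α → X} {ρ : α → ℝ} {x₀ : X} {U : Set X} (hx : Tendsto x l (𝓝 x₀))
    (hρ : Tendsto ρ l (𝓝 0)) (hU : U ∈ 𝓝 x₀) : ∀ᶠ a in l, closedBall (x a) (ρ a) ⊆ U := by
  obtain ⟨r, hr, hrU⟩ := Metric.mem_nhds_iff.1 hU
  filter_upwards [hx (ball_mem_nhds x₀ (half_pos hr)), hρ (Iio_mem_nhds (half_pos hr))]
    with a (hxa : dist (x a) x₀ < r / 2) (hρa : ρ a < r / 2)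
  exact (closedBall_subset_ball' (by linarith)).trans hrU

theorem secondDiff_le_of_isMinOn_closedBall {X : Type*} [SeminormedAddCommGroup X]
    [ProperSpace X] {φ : X → ℝ} {x h : X} {ε η : ℝ} (hφ : ContinuousOn φ (closedBall x ε))
    (hh : ‖h‖ ≤ ε) (hmin : IsMinOn φ (closedBall x ε) (x + h))
    (hdpp : 2 * φ x ≥ sSup (φ '' closedBall x ε) + sInf (φ '' closedBall x ε) - 2 * η) :
    secondDiff φ x h ≤ 2 * η := by
  have hsup : φ (x - h) ≤ sSup (φ '' closedBall x ε) :=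
    le_csSup ((isCompact_closedBall x ε).bddAbove_image hφ)
      (mem_image_of_mem φ (by simpa [dist_eq_norm] using hh))
  have hinf : φ (x + h) ≤ sInf (φ '' closedBall x ε) :=
    le_csInf ((nonempty_closedBall.2 ((norm_nonneg h).trans hh)).image φ)
      (forall_mem_image.2 fun _ hz => hmin hz)
  rw [secondDiff]
  linarith

theorem exists_isMinOn_closedBall_add_smul {X : Type*} [NormedAddCommGroup X] [NormedSpace ℝ X]
    [ProperSpace X] {φ : X → ℝ} {x : ℝ → X}
    (hφ : ∀ᶠ ε in 𝓝[>] 0, ContinuousOn φ (closedBall (x ε) ε)) :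
    ∃ w : ℝ → X, ∀ᶠ ε in 𝓝[>] 0, ‖w ε‖ ≤ 1 ∧ IsMinOn φ (closedBall (x ε) ε) (x ε + ε • w ε) := by
  have hex : ∀ᶠ ε in 𝓝[>] 0, ∃ u : X, ‖u‖ ≤ 1 ∧ IsMinOn φ (closedBall (x ε) ε) (x ε + ε • u) := by
    filter_upwards [hφ, self_mem_nhdsWithin] with ε hφε (hε : 0 < ε)
    obtain ⟨y, hy, hmin⟩ := (isCompact_closedBall (x ε) ε).exists_isMinOn
      (nonempty_closedBall.2 hε.le) hφε
    refine ⟨ε⁻¹ • (y - x ε), ?_, by rwa [smul_inv_smul₀ hε.ne', add_sub_cancel]⟩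
    rw [mem_closedBall, dist_eq_norm] at hy
    rwa [norm_smul, norm_inv, Real.norm_of_nonneg hε.le, inv_mul_le_one₀ hε]
  exact hex.choice

theorem HasStrictFDerivAt.isLittleO_comp {α F F' : Type*} [NormedAddCommGroup F]
    [NormedSpace ℝ F] [NormedAddCommGroup F'] [NormedSpace ℝ F'] {f : F → F'} {f' : F →L[ℝ] F'}
    {x₀ : F} {l : Filter α} (hf : HasStrictFDerivAt f f' x₀) {x h : α → F} {ρ : α → ℝ}
    (hx : Tendsto x l (𝓝 x₀)) (hh : h =O[l] ρ) (hρ : Tendsto ρ l (𝓝 0)) :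
    (fun a => f (x a + h a) - f (x a) - f' (h a)) =o[l] ρ := by
  have hxh : Tendsto (fun a => x a + h a) l (𝓝 x₀) := by
    simpa using hx.add (hh.trans_tendsto hρ)
  have := hf.isLittleO.comp_tendsto (hxh.prodMk_nhds hx)
  simp only [Function.comp_def, add_sub_cancel_left] at this
  exact this.trans_isBigO hh

section InnerProductSpace

variable {E : Type*} [NormedAddCommGroup E] [InnerProductSpace ℝ E]

theorem tendsto_neg_of_norm_le_one_of_inner_le {α : Type*} {l : Filter α} {v : E}
    (hv : ‖v‖ = 1) {w : α → E} {a : α → ℝ} (hw : ∀ᶠ i in l, ‖w i‖ ≤ 1)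
    (ha : Tendsto a l (𝓝 0)) (hinner : ∀ᶠ i in l, ⟪v, w i⟫ ≤ -1 + a i) :
    Tendsto w l (𝓝 (-v)) := by
  have hsq : ∀ᶠ i in l, ‖w i - -v‖ ^ 2 ≤ 2 * a i := by
    filter_upwards [hw, hinner] with i hwi hi
    rw [sub_neg_eq_add, norm_add_sq_real, hv, real_inner_comm]
    nlinarith [norm_nonneg (w i)]
  have hsq0 : Tendsto (fun i => ‖w i - -v‖ ^ 2) l (𝓝 0) :=
    squeeze_zero' (.of_forall fun _ => sq_nonneg _) hsq (by simpa using ha.const_mul 2)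
  rw [tendsto_iff_norm_sub_tendsto_zero]
  simpa [Real.sqrt_sq (norm_nonneg _)] using hsq0.sqrt

variable [CompleteSpace E]

theorem ContDiffAt.contDiffAt_gradient {φ : E → ℝ} {x : E} {n : WithTop ℕ∞}
    (hφ : ContDiffAt ℝ (n + 1) φ x) : ContDiffAt ℝ n (gradient φ) x :=
  (InnerProductSpace.toDual ℝ E).symm.contDiff.contDiffAt.comp x (hφ.fderiv_right le_rfl)

theorem abs_secondDiff_sub_inner_le {φ : E → ℝ} {g : E → E} {A : E →L[ℝ] E} {s : Set E}
    {δ : ℝ} (hδ : 0 ≤ δ) (hs : Convex ℝ s) (hφ : ∀ y ∈ s, HasGradientAt φ (g y) y)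
    (hg : ∀ y ∈ s, ∀ z ∈ s, ‖g y - g z - A (y - z)‖ ≤ δ * ‖y - z‖) {x h : E}
    (hp : x + h ∈ s) (hm : x - h ∈ s) :
    |secondDiff φ x h - ⟪A h, h⟫| ≤ 2 * δ * ‖h‖ ^ 2 := by
  have hmem : ∀ t : ℝ, |t| ≤ 1 → x + t • h ∈ s := fun t ht =>
    hs.add_smul_mem_of_add_mem_of_sub_mem hp hm ht
  have hline : ∀ t : ℝ, |t| ≤ 1 →
      HasDerivAt (fun τ : ℝ => φ (x + τ • h)) ⟪g (x + t • h), h⟫ t := fun t ht => by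
    have := (hφ _ (hmem t ht)).hasFDerivAt.comp_hasDerivAt t
      (((hasDerivAt_id t).smul_const h).const_add x)
    simp only [one_smul, InnerProductSpace.toDual_apply_apply] at this
    exact this
  set K := ⟪A h, h⟫
  -- mean value inequality for `τ ↦ φ (x + τ h) + φ (x - τ h) - τ² K` on `[0, 1]`
  have hderiv : ∀ t ∈ Icc (0 : ℝ) 1, HasDerivWithinAt
      (fun τ => φ (x + τ • h) + φ (x + (-τ) • h) - τ ^ 2 * K)
      ⟪g (x + t • h) - g (x + (-t) • h) - A ((2 * t) • h), h⟫ (Icc 0 1) t := by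
    intro t ⟨ht₀, ht₁⟩
    have hpos := hline t (by rwa [abs_of_nonneg ht₀])
    have hneg := (hline (-t) (by rwa [abs_neg, abs_of_nonneg ht₀])).comp t (hasDerivAt_neg t)
    have hsq := (hasDerivAt_pow 2 t).mul_const K
    refine (((hpos.add hneg).sub hsq).congr_deriv ?_).hasDerivWithinAt
    simp only [inner_sub_left, map_smul, real_inner_smul_left, K]
    ring
  have hbound : ∀ t ∈ Ico (0 : ℝ) 1,
      ‖⟪g (x + t • h) - g (x + (-t) • h) - A ((2 * t) • h), h⟫‖ ≤ 2 * δ * ‖h‖ ^ 2 := by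
    intro t ⟨ht₀, ht₁⟩
    have hlin := hg _ (hmem t (by rw [abs_of_nonneg ht₀]; exact ht₁.le)) _
      (hmem (-t) (by rw [abs_neg, abs_of_nonneg ht₀]; exact ht₁.le))
    rw [show (x + t • h) - (x + (-t) • h) = (2 * t) • h by module, norm_smul,
      Real.norm_of_nonneg (by positivity)] at hlin
    calc _ ≤ ‖g (x + t • h) - g (x + (-t) • h) - A ((2 * t) • h)‖ * ‖h‖ :=
          norm_inner_le_norm _ _
      _ ≤ δ * (2 * t * ‖h‖) * ‖h‖ := by gcongr
      _ ≤ 2 * δ * ‖h‖ ^ 2 := by nlinarith [mul_nonneg hδ (sq_nonneg ‖h‖)]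
  have hF := norm_image_sub_le_of_norm_deriv_le_segment_01' hderiv hbound
  rw [Real.norm_eq_abs] at hF
  convert hF using 2
  simp [secondDiff, K, ← sub_eq_add_neg]
  ring

theorem isLittleO_secondDiff {φ : E → ℝ} {g : E → E} {A : E →L[ℝ] E} {x₀ : E}
    (hφ : ∀ᶠ y in 𝓝 x₀, HasGradientAt φ (g y) y) (hg : HasStrictFDerivAt g A x₀) :
    (fun p : E × E => secondDiff φ p.1 p.2 - ⟪A p.2, p.2⟫) =o[𝓝 (x₀, 0)] fun p => ‖p.2‖ ^ 2 := by
  refine IsLittleO.of_bound fun c hc => ?_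
  have hpair : ∀ᶠ p in 𝓝 (x₀, x₀), HasGradientAt φ (g p.1) p.1 ∧
      ‖g p.1 - g p.2 - A (p.1 - p.2)‖ ≤ c / 2 * ‖p.1 - p.2‖ :=
    (continuous_fst.tendsto (x₀, x₀) |>.eventually hφ).and (hg.isLittleO.def (half_pos hc))
  obtain ⟨r, hr, hball⟩ := Metric.eventually_nhds_iff_ball.1 hpair
  rw [← ball_prod_same] at hball
  have hnear : ∀ᶠ p in 𝓝 (x₀, (0 : E)), p ∈ ball x₀ (r / 2) ×ˢ ball 0 (r / 2) :=
    prod_mem_nhds (ball_mem_nhds _ (half_pos hr)) (ball_mem_nhds _ (half_pos hr))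
  filter_upwards [hnear] with ⟨x, h⟩ ⟨hx, hh⟩
  rw [mem_ball_zero_iff] at hh
  rw [mem_ball_iff_norm] at hx
  have hp : x + h ∈ ball x₀ r := by
    rw [mem_ball_iff_norm, add_sub_right_comm]
    linarith [norm_add_le (x - x₀) h]
  have hm : x - h ∈ ball x₀ r := by
    rw [mem_ball_iff_norm, sub_right_comm]
    linarith [norm_sub_le (x - x₀) h]
  have := abs_secondDiff_sub_inner_le (half_pos hc).le (convex_ball x₀ r)
    (fun y hy => (hball (y, y) ⟨hy, hy⟩).1) (fun y hy z hz => (hball (y, z) ⟨hy, hz⟩).2) hp hm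
  simp only [Real.norm_eq_abs, abs_pow, abs_norm]
  linarith

theorem isLittleO_secondDiff_comp {α : Type*} {l : Filter α} {φ : E → ℝ} {g : E → E}
    {A : E →L[ℝ] E} {x₀ : E} (hφ : ∀ᶠ y in 𝓝 x₀, HasGradientAt φ (g y) y)
    (hg : HasStrictFDerivAt g A x₀) {x h : α → E} {ρ : α → ℝ} (hx : Tendsto x l (𝓝 x₀))
    (hh : h =O[l] ρ) (hρ : Tendsto ρ l (𝓝 0)) :
    (fun a => secondDiff φ (x a) (h a) - ⟪A (h a), h a⟫) =o[l] fun a => ρ a ^ 2 :=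
  ((isLittleO_secondDiff hφ hg).comp_tendsto
    (hx.prodMk_nhds (hh.trans_tendsto hρ))).trans_isBigO (hh.norm_left.pow 2)

theorem tendsto_secondDiff_div_sq {φ : E → ℝ} {g : E → E} {A : E →L[ℝ] E} {x₀ w₀ : E}
    (hφ : ∀ᶠ y in 𝓝 x₀, HasGradientAt φ (g y) y) (hg : HasStrictFDerivAt g A x₀)
    {x w : ℝ → E} (hx : Tendsto x (𝓝[>] 0) (𝓝 x₀)) (hw : Tendsto w (𝓝[>] 0) (𝓝 w₀)) :
    Tendsto (fun ε => secondDiff φ (x ε) (ε • w ε) / ε ^ 2) (𝓝[>] 0) (𝓝 ⟪A w₀, w₀⟫) := by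
  have hO : (fun ε => ε • w ε) =O[𝓝[>] 0] fun ε => ε := by
    simpa using (isBigO_refl (fun ε : ℝ => ε) _).smul (hw.isBigO_one ℝ)
  have hR := (isLittleO_secondDiff_comp hφ hg hx hO nhdsWithin_le_nhds).tendsto_div_nhds_zero
  have hQ : Tendsto (fun ε => ⟪A (w ε), w ε⟫) (𝓝[>] 0) (𝓝 ⟪A w₀, w₀⟫) :=
    ((A.continuous.tendsto w₀).comp hw).inner hw
  rw [← add_zero ⟪A w₀, w₀⟫]
  refine (hQ.add hR).congr' ?_
  filter_upwards [self_mem_nhdsWithin] with ε (hε : 0 < ε)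
  simp only [map_smul, real_inner_smul_left, real_inner_smul_right]
  field_simp
  ring

theorem tendsto_neg_of_isMinOn_closedBall {φ : E → ℝ} {G x₀ : E}
    (hφ : HasStrictFDerivAt φ (InnerProductSpace.toDual ℝ E G) x₀) (hG : G ≠ 0) {x w : ℝ → E}
    (hx : Tendsto x (𝓝[>] 0) (𝓝 x₀))
    (hw : ∀ᶠ ε in 𝓝[>] 0, ‖w ε‖ ≤ 1 ∧ IsMinOn φ (closedBall (x ε) ε) (x ε + ε • w ε)) :
    Tendsto w (𝓝[>] 0) (𝓝 (-(‖G‖⁻¹ • G))) := by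
  set v := ‖G‖⁻¹ • G
  have hGpos : 0 < ‖G‖ := norm_pos_iff.2 hG
  have hv : ‖v‖ = 1 := norm_smul_inv_norm hG
  have hGv : ∀ u, ⟪G, u⟫ = ‖G‖ * ⟪v, u⟫ := fun u => by
    rw [real_inner_smul_left, mul_inv_cancel_left₀ hGpos.ne']
  have hwle : ∀ᶠ ε in 𝓝[>] 0, ‖w ε‖ ≤ 1 := hw.mono fun _ h => h.1
  have hO : ∀ u : ℝ → E, (∀ᶠ ε in 𝓝[>] 0, ‖u ε‖ ≤ 1) →
      (fun ε => ε • u ε) =O[𝓝[>] 0] fun ε => ε := fun u hu =>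
    .of_bound 1 <| hu.mono fun ε hu => by
      rw [norm_smul, one_mul]
      exact mul_le_of_le_one_right (norm_nonneg ε) hu
  have hRw : (fun ε => φ (x ε + ε • w ε) - φ (x ε) - ε * (‖G‖ * ⟪v, w ε⟫))
      =o[𝓝[>] 0] fun ε => ε := by
    simpa [hGv, real_inner_smul_right] using
      hφ.isLittleO_comp hx (hO w hwle) nhdsWithin_le_nhds
  have hRv : (fun ε => φ (x ε - ε • v) - φ (x ε) + ‖G‖ * ε) =o[𝓝[>] 0] fun ε => ε := by
    simpa [hGv, real_inner_smul_right, hv, ← sub_eq_add_neg] using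
      hφ.isLittleO_comp hx (hO (fun _ => -v) (.of_forall fun _ => by simp [hv])) nhdsWithin_le_nhds
  refine tendsto_neg_of_norm_le_one_of_inner_le hv hwle
    (by simpa only [zero_div] using (hRv.sub hRw).tendsto_div_nhds_zero.div_const ‖G‖) ?_
  filter_upwards [hw, self_mem_nhdsWithin] with ε ⟨_, hmin⟩ (hε : 0 < ε)
  have hle : φ (x ε + ε • w ε) ≤ φ (x ε - ε • v) :=
    hmin (by simp [norm_smul, hv, abs_of_pos hε])
  rw [div_div, ← sub_le_iff_le_add', le_div_iff₀ (by positivity)]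
  nlinarith

end InnerProductSpace

/-- If φ is C² near x₀ with ∇φ(x₀) ≠ 0 and the Dynamic Programming
Principle inequality 2φ(x_ε) ≥ max_{B̄_ε(x_ε)}φ + min_{B̄_ε(x_ε)}φ − 2η(ε) holds
with x_ε → x₀ and η(ε) = o(ε²), then Δ_∞φ(x₀) ≤ 0. -/
theorem dpp_implies_supersolution_nonzero_gradient {n : ℕ}
    (φ : EuclideanSpace ℝ (Fin n) → ℝ) (x₀ : EuclideanSpace ℝ (Fin n))
    (xe : ℝ → EuclideanSpace ℝ (Fin n)) (η : ℝ → ℝ)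
    (hφ : ContDiffAt ℝ 2 φ x₀) (hgrad : gradient φ x₀ ≠ 0)
    (hxe : Tendsto xe (𝓝[>] (0 : ℝ)) (𝓝 x₀))
    (hη : Tendsto (fun ε => η ε / ε ^ 2) (𝓝[>] (0 : ℝ)) (𝓝 0))
    (hDPP : ∀ᶠ ε in 𝓝[>] (0 : ℝ),
      2 * φ (xe ε) ≥ sSup (φ '' closedBall (xe ε) ε)
        + sInf (φ '' closedBall (xe ε) ε) - 2 * η ε) :
    ⟪fderiv ℝ (gradient φ) x₀ (‖gradient φ x₀‖⁻¹ • gradient φ x₀),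
      ‖gradient φ x₀‖⁻¹ • gradient φ x₀⟫ ≤ 0 := by
  have hφ₁ : HasStrictFDerivAt φ (InnerProductSpace.toDual ℝ _ (gradient φ x₀)) x₀ := by
    rw [toDual_gradient]
    exact hφ.hasStrictFDerivAt two_ne_zero
  have hnear := hφ.eventually (by simp)
  have hcont : ∀ᶠ ε in 𝓝[>] 0, ContinuousOn φ (closedBall (xe ε) ε) :=
    (hxe.eventually_closedBall_subset nhdsWithin_le_nhds hnear).mono fun _ hsub =>
      continuousOn_of_forall_continuousAt fun _ hy => ContDiffAt.continuousAt (n := 2) (hsub hy)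
  obtain ⟨w, hw⟩ := exists_isMinOn_closedBall_add_smul hcont
  have hlim := tendsto_secondDiff_div_sq
    (hnear.mono fun y hy => (hy.differentiableAt two_ne_zero).hasGradientAt)
    ((hφ.contDiffAt_gradient (n := 1)).hasStrictFDerivAt one_ne_zero) hxe
    (tendsto_neg_of_isMinOn_closedBall hφ₁ hgrad hxe hw)
  have hle : ∀ᶠ ε in 𝓝[>] 0, secondDiff φ (xe ε) (ε • w ε) / ε ^ 2 ≤ 2 * (η ε / ε ^ 2) := by
    filter_upwards [hw, hcont, hDPP, self_mem_nhdsWithin] with ε ⟨hwε, hmin⟩ hcε hdpp (hε : 0 < ε)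
    rw [mul_div_assoc', div_le_div_iff_of_pos_right (by positivity)]
    refine secondDiff_le_of_isMinOn_closedBall hcε ?_ hmin hdpp
    rw [norm_smul, Real.norm_of_nonneg hε.le]
    exact mul_le_of_le_one_right hε.le hwε
  simpa using le_of_tendsto_of_tendsto hlim (by simpa using hη.const_mul 2) hle
end

section
/- Let φ be C² near x₀ ∈ ℝⁿ, ∇φ(x₀) ≠ 0, and suppose x_ε → x₀, points y_ε ∈ B̄_ε(x_ε) satisfy (y_ε − x_ε)/ε → −∇φ(x₀)/|∇φ(x₀)|, and with ỹ_ε = 2x_ε − y_ε one has φ(y_ε) + φ(ỹ_ε) − 2φ(x_ε) ≤ η(ε) with η(ε) = o(ε²). Then ⟨D²φ(x₀) ∇φ(x₀)/|∇φ(x₀)|, ∇φ(x₀)/|∇φ(x₀)|⟩ ≤ 0. -/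
/-!
Along the segment through `x`, `ψ t = φ (x + t h) + φ (x - t h) - 2 φ x - t² D²φ(x₀)[h, h]` has
derivative `(∇φ (x + t h) - ∇φ (x - t h) - D²φ(x₀) (2 t h)) ⬝ h`, and strict differentiability of
`∇φ` at `x₀` makes this `o(‖h‖²)` uniformly for `x` near `x₀`. So the second difference is
`D²φ(x₀)[h, h] + o(‖h‖²)` as `(x, h) → (x₀, 0)`. With `x = x_ε`, `h = y_ε - x_ε = ε u_ε` and
`u_ε → -∇φ(x₀)/|∇φ(x₀)|`, dividing the hypothesis by `ε²` gives
`D²φ(x₀)[u_ε, u_ε] ≤ η(ε)/ε² + o(1)`, and the claim follows in the limit.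
-/

open RealInnerProductSpace Filter Topology Metric
open Set Asymptotics

section

variable {E F : Type*} [NormedAddCommGroup E] [NormedSpace ℝ E]
  [NormedAddCommGroup F] [NormedSpace ℝ F]

theorem Convex.add_smul_mem_of_sub_mem_of_add_mem {s : Set E} (hs : Convex ℝ s) {x h : E}
    (hminus : x - h ∈ s) (hplus : x + h ∈ s) {t : ℝ} (ht : t ∈ Icc (-1 : ℝ) 1) :
    x + t • h ∈ s := by
  convert hs hminus hplus (a := (1 - t) / 2) (b := (1 + t) / 2) (by linarith [ht.2])
    (by linarith [ht.1]) (by ring) using 1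
  module

theorem Convex.norm_secondDifference_sub_le {s : Set E} (hs : Convex ℝ s) {φ : E → F}
    {φ' : E → E →L[ℝ] F} {D : E →L[ℝ] E →L[ℝ] F} {C : ℝ} (hC : 0 ≤ C)
    (hφ : ∀ z ∈ s, HasFDerivAt φ (φ' z) z)
    (hφ' : ∀ a ∈ s, ∀ b ∈ s, ‖φ' a - φ' b - D (a - b)‖ ≤ C * ‖a - b‖)
    {x h : E} (hminus : x - h ∈ s) (hplus : x + h ∈ s) :
    ‖φ (x + h) + φ (x - h) - (2 : ℝ) • φ x - D h h‖ ≤ 2 * C * ‖h‖ ^ 2 := by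
  have hmem : ∀ t ∈ Icc (0 : ℝ) 1, x + t • h ∈ s ∧ x - t • h ∈ s := fun t ht =>
    ⟨hs.add_smul_mem_of_sub_mem_of_add_mem hminus hplus ⟨by linarith [ht.1], ht.2⟩, by
      simpa [sub_eq_add_neg] using hs.add_smul_mem_of_sub_mem_of_add_mem hminus hplus
        (t := -t) ⟨by linarith [ht.2], by linarith [ht.1]⟩⟩
  have hdiff : ∀ t : ℝ, (x + t • h) - (x - t • h) = (2 * t) • h := fun t => by module
  set ψ : ℝ → F := fun t => φ (x + t • h) + φ (x - t • h) - (2 : ℝ) • φ x - t ^ 2 • D h h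
  have hψ' : ∀ t ∈ Icc (0 : ℝ) 1, HasDerivWithinAt ψ
      ((φ' (x + t • h) - φ' (x - t • h) - D ((x + t • h) - (x - t • h))) h) (Icc 0 1) t := by
    intro t ht
    have hplus := (hφ _ (hmem t ht).1).comp_hasDerivAt t
      (((hasDerivAt_id t).smul_const h).const_add x)
    have hminus := (hφ _ (hmem t ht).2).comp_hasDerivAt t
      (((hasDerivAt_id t).smul_const h).const_sub x)
    have hsq := (hasDerivAt_pow 2 t).smul_const (D h h)
    refine (((hplus.add hminus).sub_const ((2 : ℝ) • φ x)).sub hsq).hasDerivWithinAt.congr_deriv ?_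
    rw [hdiff]
    simp only [one_smul, map_neg, map_smul, sub_apply, smul_apply]
    module
  have hbound : ∀ t ∈ Icc (0 : ℝ) 1,
      ‖(φ' (x + t • h) - φ' (x - t • h) - D ((x + t • h) - (x - t • h))) h‖ ≤ 2 * C * ‖h‖ ^ 2 := by
    intro t ht
    calc _ ≤ ‖φ' (x + t • h) - φ' (x - t • h) - D ((x + t • h) - (x - t • h))‖ * ‖h‖ :=
          ContinuousLinearMap.le_opNorm _ _
      _ ≤ C * ‖(2 * t) • h‖ * ‖h‖ := by
          grw [hφ' _ (hmem t ht).1 _ (hmem t ht).2, hdiff]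
      _ = t * (2 * C * ‖h‖ ^ 2) := by
          rw [norm_smul, Real.norm_of_nonneg (by linarith [ht.1])]
          ring
      _ ≤ 2 * C * ‖h‖ ^ 2 := mul_le_of_le_one_left (by positivity) ht.2
  have := (convex_Icc (0 : ℝ) 1).norm_image_sub_le_of_norm_hasDerivWithin_le hψ' hbound
    (left_mem_Icc.mpr zero_le_one) (right_mem_Icc.mpr zero_le_one)
  simpa [ψ, two_smul] using this

theorem HasStrictFDerivAt.isLittleO_secondDifference {φ : E → F} {φ' : E → E →L[ℝ] F}
    {D : E →L[ℝ] E →L[ℝ] F} {x₀ : E} (hφ : ∀ᶠ z in 𝓝 x₀, HasFDerivAt φ (φ' z) z)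
    (hφ' : HasStrictFDerivAt φ' D x₀) :
    (fun p : E × E => φ (p.1 + p.2) + φ (p.1 - p.2) - (2 : ℝ) • φ p.1 - D p.2 p.2)
      =o[𝓝 x₀ ×ˢ 𝓝 0] fun p => ‖p.2‖ ^ 2 := by
  refine isLittleO_iff.mpr fun δ hδ => ?_
  have hstrict := hφ'.isLittleO.def (half_pos hδ)
  rw [nhds_prod_eq] at hstrict
  obtain ⟨t, ht, hbound⟩ := (eventually_prod_self_iff
    (r := fun a b => ‖φ' a - φ' b - D (a - b)‖ ≤ δ / 2 * ‖a - b‖)).mp hstrict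
  obtain ⟨r, hr, hball⟩ := Metric.mem_nhds_iff.mp (inter_mem ht hφ)
  filter_upwards [prod_mem_prod (ball_mem_nhds x₀ (half_pos hr)) (ball_mem_nhds 0 (half_pos hr))]
    with ⟨x, h⟩ ⟨hx, hh⟩
  have hmem : ∀ y, ‖y‖ < r / 2 → x + y ∈ ball x₀ r := fun y hy => by
    rw [mem_ball] at hx ⊢
    calc dist (x + y) x₀ ≤ dist (x + y) x + dist x x₀ := dist_triangle _ _ _
      _ < r := by rw [dist_self_add_left]; linarith
  rw [mem_ball_zero_iff] at hh
  have key := (convex_ball x₀ r).norm_secondDifference_sub_le (half_pos hδ).le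
    (fun z hz => (hball hz).2) (fun a ha b hb => hbound a (hball ha).1 b (hball hb).1)
    (by simpa [sub_eq_add_neg] using hmem (-h) (by simpa using hh)) (hmem h hh)
  simpa [mul_div_cancel₀] using key

theorem Asymptotics.IsLittleO.tendsto_div_sq_of_tendsto_inv_smul {R : E × E → ℝ} {x₀ w : E}
    (hR : R =o[𝓝 x₀ ×ˢ 𝓝 0] fun p => ‖p.2‖ ^ 2) {x h : ℝ → E}
    (hx : Tendsto x (𝓝[>] 0) (𝓝 x₀)) (hh : Tendsto (fun ε => ε⁻¹ • h ε) (𝓝[>] 0) (𝓝 w)) :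
    Tendsto (fun ε => R (x ε, h ε) / ε ^ 2) (𝓝[>] 0) (𝓝 0) := by
  have hrescale : ∀ᶠ ε in 𝓝[>] (0 : ℝ), ε • (ε⁻¹ • h ε) = h ε :=
    eventually_mem_nhdsWithin.mono fun ε hε => smul_inv_smul₀ (ne_of_gt hε) _
  have hh0 : Tendsto h (𝓝[>] 0) (𝓝 0) := by
    have := (tendsto_nhdsWithin_of_tendsto_nhds tendsto_id).smul hh
    rw [zero_smul] at this
    exact this.congr' hrescale
  have hsq : (fun ε => ‖h ε‖ ^ 2) =O[𝓝[>] 0] fun ε : ℝ => ε ^ 2 := by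
    have hbdd := (hh.norm.pow 2).isBigO_one ℝ
    refine (hbdd.mul (isBigO_refl (fun ε : ℝ => ε ^ 2) _)).congr' ?_ (by simp)
    filter_upwards [self_mem_nhdsWithin] with ε (hε : 0 < ε)
    rw [norm_smul, norm_inv, Real.norm_of_nonneg hε.le]
    field_simp
  have := (hR.comp_tendsto (hx.prodMk hh0)).trans_isBigO hsq
  exact this.tendsto_div_nhds_zero

end

theorem ContDiffAt.isLittleO_secondDifference_sub_inner {E : Type*} [NormedAddCommGroup E]
    [InnerProductSpace ℝ E] [CompleteSpace E] {φ : E → ℝ} {x₀ : E} (hφ : ContDiffAt ℝ 2 φ x₀) :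
    (fun p : E × E => φ (p.1 + p.2) + φ (p.1 - p.2) - 2 * φ p.1
        - ⟪fderiv ℝ (gradient φ) x₀ p.2, p.2⟫) =o[𝓝 x₀ ×ˢ 𝓝 0] fun p => ‖p.2‖ ^ 2 := by
  have hgrad : ContDiffAt ℝ 1 (gradient φ) x₀ :=
    (InnerProductSpace.toDual ℝ E).symm.contDiff.comp_contDiffAt x₀
      (hφ.fderiv_right (by norm_num))
  have hφ' : ∀ᶠ z in 𝓝 x₀, HasFDerivAt φ (InnerProductSpace.toDual ℝ E (gradient φ z)) z :=
    (hφ.eventually (by simp)).mono fun z hz =>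
      (hz.differentiableAt (by norm_num)).hasGradientAt.hasFDerivAt
  have hD := ((InnerProductSpace.toDual ℝ E).toContinuousLinearEquiv.hasStrictFDerivAt).comp x₀
    (hgrad.hasStrictFDerivAt one_ne_zero)
  simpa [two_smul, two_mul] using hD.isLittleO_secondDifference hφ'

theorem reflection_argument_supersolution_general {n : ℕ}
    (φ : EuclideanSpace ℝ (Fin n) → ℝ) (x₀ : EuclideanSpace ℝ (Fin n))
    (xe ye : ℝ → EuclideanSpace ℝ (Fin n)) (η : ℝ → ℝ)
    (hφ : ContDiffAt ℝ 2 φ x₀)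
    (hxe : Tendsto xe (𝓝[>] (0 : ℝ)) (𝓝 x₀))
    (hdir : Tendsto (fun ε : ℝ => ε⁻¹ • (ye ε - xe ε)) (𝓝[>] (0 : ℝ))
      (𝓝 (-(‖gradient φ x₀‖⁻¹ • gradient φ x₀))))
    (hη : Tendsto (fun ε => η ε / ε ^ 2) (𝓝[>] (0 : ℝ)) (𝓝 0))
    (hineq : ∀ᶠ ε in 𝓝[>] (0 : ℝ),
      φ (ye ε) + φ ((2 : ℝ) • xe ε - ye ε) - 2 * φ (xe ε) ≤ η ε) :
    ⟪fderiv ℝ (gradient φ) x₀ (‖gradient φ x₀‖⁻¹ • gradient φ x₀),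
      ‖gradient φ x₀‖⁻¹ • gradient φ x₀⟫ ≤ 0 := by
  have hremainder :=
    hφ.isLittleO_secondDifference_sub_inner.tendsto_div_sq_of_tendsto_inv_smul hxe hdir
  have hquadratic :=
    (((fderiv ℝ (gradient φ) x₀).continuous.inner (𝕜 := ℝ) continuous_id).tendsto _).comp hdir
  simp only [Function.comp_def, id, map_neg, inner_neg_neg] at hquadratic
  refine le_of_tendsto_of_tendsto hquadratic (by simpa using hη.sub hremainder) ?_
  filter_upwards [hineq, self_mem_nhdsWithin] with ε hε (hpos : 0 < ε)
  have hreflect : xe ε - (ye ε - xe ε) = (2 : ℝ) • xe ε - ye ε := by module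
  simp only [hreflect, map_sub, map_smul, real_inner_smul_left, real_inner_smul_right]
  rw [← sub_div, le_div_iff₀ (by positivity)]
  field_simp
  linarith

/-- The second-order reflection argument: if φ is C² near x₀ with
∇φ(x₀) ≠ 0, x_ε → x₀, y_ε ∈ B̄_ε(x_ε) with (y_ε − x_ε)/ε → −∇φ(x₀)/|∇φ(x₀)|,
and φ(y_ε) + φ(2x_ε − y_ε) − 2φ(x_ε) ≤ η(ε) with η(ε) = o(ε²), then
⟨D²φ(x₀)∇φ(x₀)/|∇φ(x₀)|, ∇φ(x₀)/|∇φ(x₀)|⟩ ≤ 0. -/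
theorem reflection_argument_supersolution {n : ℕ}
    (φ : EuclideanSpace ℝ (Fin n) → ℝ) (x₀ : EuclideanSpace ℝ (Fin n))
    (xe ye : ℝ → EuclideanSpace ℝ (Fin n)) (η : ℝ → ℝ)
    (hφ : ContDiffAt ℝ 2 φ x₀) (hgrad : gradient φ x₀ ≠ 0)
    (hxe : Tendsto xe (𝓝[>] (0 : ℝ)) (𝓝 x₀))
    (hye : ∀ᶠ ε in 𝓝[>] (0 : ℝ), ye ε ∈ closedBall (xe ε) ε)
    (hdir : Tendsto (fun ε : ℝ => ε⁻¹ • (ye ε - xe ε)) (𝓝[>] (0 : ℝ))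
      (𝓝 (-(‖gradient φ x₀‖⁻¹ • gradient φ x₀))))
    (hη : Tendsto (fun ε => η ε / ε ^ 2) (𝓝[>] (0 : ℝ)) (𝓝 0))
    (hineq : ∀ᶠ ε in 𝓝[>] (0 : ℝ),
      φ (ye ε) + φ ((2 : ℝ) • xe ε - ye ε) - 2 * φ (xe ε) ≤ η ε) :
    ⟪fderiv ℝ (gradient φ) x₀ (‖gradient φ x₀‖⁻¹ • gradient φ x₀),
      ‖gradient φ x₀‖⁻¹ • gradient φ x₀⟫ ≤ 0 :=
  reflection_argument_supersolution_general φ x₀ xe ye η hφ hxe hdir hη hineq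
end
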